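/- arXiv:1408.5602 — 6 statements merged into one kernel-verified Lean document; each statement's English description precedes it below -/
import Mathlib

section
/- Let f be a homeomorphism of a metric space M, let A : M → GL(V), and fix x, y ∈ M and β > 0. Suppose there exist constants c > 0, L > 0 and θ ∈ (0,1) such that for all n ≥ 0: (a) ‖A(fⁿy)⁻¹∘A(fⁿx) − Id‖ ≤ c·dist(fⁿx, fⁿy)^β and ‖A(fⁿx)⁻¹∘A(fⁿy) − Id‖ ≤ c·dist(fⁿx, fⁿy)^β; (b) ‖(Aⁿ_y)⁻¹‖·‖Aⁿ_x‖·dist(fⁿx, fⁿy)^β ≤ L·θⁿ·dist(x,y)^β and ‖(Aⁿ_x)⁻¹‖·‖Aⁿ_y‖·dist(fⁿx, fⁿy)^β ≤ L·θⁿ·dist(x,y)^β. Then the limits H_{x,y} = limₙ (Aⁿ_y)⁻¹∘Aⁿ_x and H_{y,x} = limₙ (Aⁿ_x)⁻¹∘Aⁿ_y exist in operator norm, these limits are mutually inverse operators (in particular H_{x,y} is invertible), and ‖H_{x,y} − Id‖ ≤ c·L·(1 − θ)⁻¹·dist(x,y)^β. -/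
open Filter Topology

/-- The cocycle generated by `A : M → GL(V)` over `f`: `A⁰_x = Id` and
`Aⁿ_x = A(f^{n−1}x) ∘ ⋯ ∘ A(fx) ∘ A(x)`. -/
noncomputable def coc {M : Type*} {V : Type*} [NormedAddCommGroup V] [NormedSpace ℝ V]
    (f : M → M) (A : M → (V →L[ℝ] V)ˣ) : ℕ → M → (V →L[ℝ] V)ˣ
  | 0, _ => 1
  | n + 1, x => coc f A n (f x) * A x

/-!
Write `g n = (Aⁿ_y)⁻¹ Aⁿ_x`. Since `Aⁿ⁺¹ = A(fⁿ·) Aⁿ`, consecutive terms differ by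
`g (n+1) - g n = (Aⁿ_y)⁻¹ (A(fⁿy)⁻¹ A(fⁿx) - Id) Aⁿ_x`, whose norm is at most `c L θⁿ dist(x,y)^β`
by (a) and (b). So `g` is Cauchy with geometrically small steps, and its limit lies within
`c L (1 - θ)⁻¹ dist(x,y)^β` of `g 0 = Id`. The sequence for `H_{y,x}` is termwise the inverse of
`g`, so the two limits are mutually inverse.
-/

lemma exists_tendsto_dist_le_of_le_geometric {α : Type*} [PseudoMetricSpace α] [CompleteSpace α]
    {r C : ℝ} (hr : r < 1) {u : ℕ → α} (hu : ∀ n, dist (u n) (u (n + 1)) ≤ C * r ^ n) :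
    ∃ a, Tendsto u atTop (𝓝 a) ∧ dist (u 0) a ≤ C / (1 - r) := by
  obtain ⟨a, ha⟩ := cauchySeq_tendsto_of_complete (cauchySeq_of_le_geometric r C hr hu)
  exact ⟨a, ha, dist_le_of_le_geometric_of_tendsto₀ r C hr hu ha⟩

lemma Units.mul_eq_one_of_tendsto {R : Type*} [Monoid R] [TopologicalSpace R] [ContinuousMul R]
    [T2Space R] {ι : Type*} {l : Filter ι} [l.NeBot] {u : ι → Rˣ} {a b : R}
    (ha : Tendsto (fun i => (u i : R)) l (𝓝 a)) (hb : Tendsto (fun i => (↑(u i)⁻¹ : R)) l (𝓝 b)) :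
    a * b = 1 ∧ b * a = 1 :=
  ⟨tendsto_nhds_unique (ha.mul hb) (by simp),
    tendsto_nhds_unique (hb.mul ha) (by simp)⟩

section Cocycle

variable {M V : Type*} [NormedAddCommGroup V] [NormedSpace ℝ V]
  (f : M → M) (A : M → (V →L[ℝ] V)ˣ)

lemma coc_succ (n : ℕ) (x : M) : coc f A (n + 1) x = A (f^[n] x) * coc f A n x := by
  induction n generalizing x with
  | zero => simp [coc]
  | succ n ih =>
    rw [coc, ih, ← Function.iterate_succ_apply, coc, mul_assoc]

lemma coc_quotient_succ_sub (x y : M) (n : ℕ) :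
    (((coc f A (n + 1) y)⁻¹ * coc f A (n + 1) x : (V →L[ℝ] V)ˣ) : V →L[ℝ] V) -
        ((coc f A n y)⁻¹ * coc f A n x : (V →L[ℝ] V)ˣ) =
      ((coc f A n y)⁻¹ : (V →L[ℝ] V)ˣ) *
        ((((A (f^[n] y))⁻¹ * A (f^[n] x) : (V →L[ℝ] V)ˣ) : V →L[ℝ] V) - 1) *
        (coc f A n x : V →L[ℝ] V) := by
  simp only [coc_succ, mul_inv_rev, Units.val_mul]
  noncomm_ring

lemma norm_coc_quotient_succ_sub_le (x y : M) (n : ℕ) {c K B : ℝ} (hc : 0 ≤ c)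
    (ha : ‖(((A (f^[n] y))⁻¹ * A (f^[n] x) : (V →L[ℝ] V)ˣ) : V →L[ℝ] V) - 1‖ ≤ c * K)
    (hb : ‖(((coc f A n y)⁻¹ : (V →L[ℝ] V)ˣ) : V →L[ℝ] V)‖ *
        ‖((coc f A n x : (V →L[ℝ] V)ˣ) : V →L[ℝ] V)‖ * K ≤ B) :
    ‖(((coc f A (n + 1) y)⁻¹ * coc f A (n + 1) x : (V →L[ℝ] V)ˣ) : V →L[ℝ] V) -
        ((coc f A n y)⁻¹ * coc f A n x : (V →L[ℝ] V)ˣ)‖ ≤ c * B := by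
  rw [coc_quotient_succ_sub]
  set P := (((coc f A n y)⁻¹ : (V →L[ℝ] V)ˣ) : V →L[ℝ] V)
  set Q := ((coc f A n x : (V →L[ℝ] V)ˣ) : V →L[ℝ] V)
  calc ‖P * ((((A (f^[n] y))⁻¹ * A (f^[n] x) : (V →L[ℝ] V)ˣ) : V →L[ℝ] V) - 1) * Q‖
      ≤ ‖P‖ * ‖(((A (f^[n] y))⁻¹ * A (f^[n] x) : (V →L[ℝ] V)ˣ) : V →L[ℝ] V) - 1‖ * ‖Q‖ :=
        norm_mul₃_le
    _ ≤ ‖P‖ * (c * K) * ‖Q‖ := by gcongr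
    _ = c * (‖P‖ * ‖Q‖ * K) := by ring
    _ ≤ c * B := by gcongr

lemma exists_tendsto_coc_quotient [CompleteSpace V] [PseudoMetricSpace M] (x y : M)
    {β c L θ D : ℝ} (hc : 0 ≤ c) (hθ1 : θ < 1)
    (ha : ∀ n : ℕ,
      ‖(((A (f^[n] y))⁻¹ * A (f^[n] x) : (V →L[ℝ] V)ˣ) : V →L[ℝ] V) - 1‖ ≤
        c * dist (f^[n] x) (f^[n] y) ^ β)
    (hb : ∀ n : ℕ,
      ‖(((coc f A n y)⁻¹ : (V →L[ℝ] V)ˣ) : V →L[ℝ] V)‖ *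
        ‖((coc f A n x : (V →L[ℝ] V)ˣ) : V →L[ℝ] V)‖ *
        dist (f^[n] x) (f^[n] y) ^ β ≤ L * θ ^ n * D) :
    ∃ H : V →L[ℝ] V,
      Tendsto (fun n : ℕ =>
          (((coc f A n y)⁻¹ * coc f A n x : (V →L[ℝ] V)ˣ) : V →L[ℝ] V)) atTop (𝓝 H) ∧
        ‖H - 1‖ ≤ c * L * (1 - θ)⁻¹ * D := by
  have hstep (n : ℕ) :
      dist (((coc f A n y)⁻¹ * coc f A n x : (V →L[ℝ] V)ˣ) : V →L[ℝ] V)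
          ((coc f A (n + 1) y)⁻¹ * coc f A (n + 1) x : (V →L[ℝ] V)ˣ) ≤ c * L * D * θ ^ n := by
    rw [dist_comm, dist_eq_norm]
    exact (norm_coc_quotient_succ_sub_le f A x y n hc (ha n) (hb n)).trans_eq (by ring)
  obtain ⟨H, hH, hdist⟩ := exists_tendsto_dist_le_of_le_geometric hθ1 hstep
  refine ⟨H, hH, ?_⟩
  rw [← dist_eq_norm, dist_comm]
  simpa [coc, div_eq_mul_inv, mul_right_comm _ D] using hdist

end Cocycle

theorem stmt_2_general {V : Type*} [NormedAddCommGroup V] [NormedSpace ℝ V] [CompleteSpace V]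
    {M : Type*} [MetricSpace M] (f : M ≃ₜ M) (A : M → (V →L[ℝ] V)ˣ)
    (x y : M) (β : ℝ) (c L θ : ℝ) (hc : 0 < c)
    (hθ1 : θ < 1)
    (ha : ∀ n : ℕ,
      ‖(((A ((⇑f)^[n] y))⁻¹ * A ((⇑f)^[n] x) : (V →L[ℝ] V)ˣ) : V →L[ℝ] V) - 1‖ ≤
          c * dist ((⇑f)^[n] x) ((⇑f)^[n] y) ^ β ∧
        ‖(((A ((⇑f)^[n] x))⁻¹ * A ((⇑f)^[n] y) : (V →L[ℝ] V)ˣ) : V →L[ℝ] V) - 1‖ ≤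
          c * dist ((⇑f)^[n] x) ((⇑f)^[n] y) ^ β)
    (hb : ∀ n : ℕ,
      ‖(((coc (⇑f) A n y)⁻¹ : (V →L[ℝ] V)ˣ) : V →L[ℝ] V)‖ *
            ‖((coc (⇑f) A n x : (V →L[ℝ] V)ˣ) : V →L[ℝ] V)‖ *
            dist ((⇑f)^[n] x) ((⇑f)^[n] y) ^ β ≤ L * θ ^ n * dist x y ^ β ∧
        ‖(((coc (⇑f) A n x)⁻¹ : (V →L[ℝ] V)ˣ) : V →L[ℝ] V)‖ *
            ‖((coc (⇑f) A n y : (V →L[ℝ] V)ˣ) : V →L[ℝ] V)‖ *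
            dist ((⇑f)^[n] x) ((⇑f)^[n] y) ^ β ≤ L * θ ^ n * dist x y ^ β) :
    ∃ Hxy Hyx : V →L[ℝ] V,
      Tendsto (fun n : ℕ =>
          (((coc (⇑f) A n y)⁻¹ * coc (⇑f) A n x : (V →L[ℝ] V)ˣ) : V →L[ℝ] V))
        atTop (𝓝 Hxy) ∧
      Tendsto (fun n : ℕ =>
          (((coc (⇑f) A n x)⁻¹ * coc (⇑f) A n y : (V →L[ℝ] V)ˣ) : V →L[ℝ] V))
        atTop (𝓝 Hyx) ∧
      Hyx * Hxy = 1 ∧ Hxy * Hyx = 1 ∧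
      ‖Hxy - 1‖ ≤ c * L * (1 - θ)⁻¹ * dist x y ^ β := by
  obtain ⟨Hxy, hxy, hnorm⟩ := exists_tendsto_coc_quotient (⇑f) A x y hc.le hθ1
    (fun n => (ha n).1) (fun n => (hb n).1)
  obtain ⟨Hyx, hyx, -⟩ := exists_tendsto_coc_quotient (⇑f) A y x (D := dist x y ^ β) hc.le hθ1
    (fun n => by simpa only [dist_comm] using (ha n).2)
    (fun n => by simpa only [dist_comm] using (hb n).2)
  have hinv : Tendsto (fun n : ℕ =>
      ((((coc (⇑f) A n y)⁻¹ * coc (⇑f) A n x)⁻¹ : (V →L[ℝ] V)ˣ) : V →L[ℝ] V))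
      atTop (𝓝 Hyx) := by
    simpa only [mul_inv_rev, inv_inv] using hyx
  obtain ⟨hxy_yx, hyx_xy⟩ := Units.mul_eq_one_of_tendsto hxy hinv
  exact ⟨Hxy, Hyx, hxy, hyx, hyx_xy, hxy_yx, hnorm⟩

/-- Convergence of `(Aⁿ_y)⁻¹ ∘ Aⁿ_x` to a holonomy operator: under the Hölder-type
assumption (a) on the generator and the summable domination assumption (b) on the
cocycle, the limits `H_{x,y}` and `H_{y,x}` exist, are mutually inverse, and
`‖H_{x,y} − Id‖ ≤ c·L·(1 − θ)⁻¹·dist(x,y)^β`. -/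
theorem stmt_2 {V : Type*} [NormedAddCommGroup V] [NormedSpace ℝ V] [CompleteSpace V]
    {M : Type*} [MetricSpace M] (f : M ≃ₜ M) (A : M → (V →L[ℝ] V)ˣ)
    (x y : M) (β : ℝ) (hβ : 0 < β) (c L θ : ℝ) (hc : 0 < c) (hL : 0 < L)
    (hθ0 : 0 < θ) (hθ1 : θ < 1)
    (ha : ∀ n : ℕ,
      ‖(((A ((⇑f)^[n] y))⁻¹ * A ((⇑f)^[n] x) : (V →L[ℝ] V)ˣ) : V →L[ℝ] V) - 1‖ ≤
          c * dist ((⇑f)^[n] x) ((⇑f)^[n] y) ^ β ∧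
        ‖(((A ((⇑f)^[n] x))⁻¹ * A ((⇑f)^[n] y) : (V →L[ℝ] V)ˣ) : V →L[ℝ] V) - 1‖ ≤
          c * dist ((⇑f)^[n] x) ((⇑f)^[n] y) ^ β)
    (hb : ∀ n : ℕ,
      ‖(((coc (⇑f) A n y)⁻¹ : (V →L[ℝ] V)ˣ) : V →L[ℝ] V)‖ *
            ‖((coc (⇑f) A n x : (V →L[ℝ] V)ˣ) : V →L[ℝ] V)‖ *
            dist ((⇑f)^[n] x) ((⇑f)^[n] y) ^ β ≤ L * θ ^ n * dist x y ^ β ∧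
        ‖(((coc (⇑f) A n x)⁻¹ : (V →L[ℝ] V)ˣ) : V →L[ℝ] V)‖ *
            ‖((coc (⇑f) A n y : (V →L[ℝ] V)ˣ) : V →L[ℝ] V)‖ *
            dist ((⇑f)^[n] x) ((⇑f)^[n] y) ^ β ≤ L * θ ^ n * dist x y ^ β) :
    ∃ Hxy Hyx : V →L[ℝ] V,
      Tendsto (fun n : ℕ =>
          (((coc (⇑f) A n y)⁻¹ * coc (⇑f) A n x : (V →L[ℝ] V)ˣ) : V →L[ℝ] V))
        atTop (𝓝 Hxy) ∧
      Tendsto (fun n : ℕ =>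
          (((coc (⇑f) A n x)⁻¹ * coc (⇑f) A n y : (V →L[ℝ] V)ˣ) : V →L[ℝ] V))
        atTop (𝓝 Hyx) ∧
      Hyx * Hxy = 1 ∧ Hxy * Hyx = 1 ∧
      ‖Hxy - 1‖ ≤ c * L * (1 - θ)⁻¹ * dist x y ^ β :=
  stmt_2_general f A x y β c L θ hc hθ1 ha hb
end

section
/- Let f be a homeomorphism of a metric space M, let A : M → GL(V) generate a cocycle, and let H and H' be stable holonomies for this cocycle. Let y ∈ Wˢ(x), and suppose there exist K > 0 and β > 0 such that for all n ∈ ℕ, ‖H_{fⁿx, fⁿy} − Id‖ ≤ K·dist(fⁿx, fⁿy)^β and ‖H'_{fⁿx, fⁿy} − Id‖ ≤ K·dist(fⁿx, fⁿy)^β, and suppose ‖(Aⁿ_y)⁻¹‖·‖Aⁿ_x‖·dist(fⁿx, fⁿy)^β → 0 as n → ∞. Then H_{x,y} = H'_{x,y}. -/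
open Filter Topology

/-- The stable set `Wˢ(x) = {y : dist(fⁿx, fⁿy) → 0}`. -/
def stableSet {M : Type*} [MetricSpace M] (f : M → M) (x : M) : Set M :=
  {y | Tendsto (fun n : ℕ => dist (f^[n] x) (f^[n] y)) atTop (𝓝 0)}

/-- A stable holonomy for the cocycle generated by `A`: a family `H x y ∈ GL(V)`
(relevant for `y ∈ Wˢ(x)`) with `H x x = Id`, `H y z ∘ H x y = H x z`, and
`H x y = (Aⁿ_y)⁻¹ ∘ H (fⁿx) (fⁿy) ∘ Aⁿ_x` for all `n`. -/
def IsStableHolonomy {M : Type*} [MetricSpace M] {V : Type*} [NormedAddCommGroup V]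
    [NormedSpace ℝ V] (f : M → M) (A : M → (V →L[ℝ] V)ˣ)
    (H : M → M → (V →L[ℝ] V)ˣ) : Prop :=
  (∀ x, H x x = 1) ∧
  (∀ x y z, y ∈ stableSet f x → z ∈ stableSet f y → H y z * H x y = H x z) ∧
  (∀ x y, y ∈ stableSet f x → ∀ n : ℕ,
    H x y = (coc f A n y)⁻¹ * H (f^[n] x) (f^[n] y) * coc f A n x)

/-- Uniqueness of Hölder-bounded stable holonomies: if two stable holonomies `H`, `H'`
satisfy `‖H_{fⁿx,fⁿy} − Id‖ ≤ K·dist(fⁿx,fⁿy)^β` and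
`‖(Aⁿ_y)⁻¹‖·‖Aⁿ_x‖·dist(fⁿx,fⁿy)^β → 0`, then `H_{x,y} = H'_{x,y}`. -/
theorem stmt_5 {V : Type*} [NormedAddCommGroup V] [NormedSpace ℝ V] [CompleteSpace V]
    {M : Type*} [MetricSpace M] (f : M ≃ₜ M) (A : M → (V →L[ℝ] V)ˣ)
    (H H' : M → M → (V →L[ℝ] V)ˣ)
    (hH : IsStableHolonomy (⇑f) A H) (hH' : IsStableHolonomy (⇑f) A H')
    (x y : M) (hy : y ∈ stableSet (⇑f) x)
    (K β : ℝ) (hK : 0 < K) (hβ : 0 < β)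
    (hHb : ∀ n : ℕ, ‖((H ((⇑f)^[n] x) ((⇑f)^[n] y) : (V →L[ℝ] V)ˣ) : V →L[ℝ] V) - 1‖ ≤
        K * dist ((⇑f)^[n] x) ((⇑f)^[n] y) ^ β)
    (hH'b : ∀ n : ℕ, ‖((H' ((⇑f)^[n] x) ((⇑f)^[n] y) : (V →L[ℝ] V)ˣ) : V →L[ℝ] V) - 1‖ ≤
        K * dist ((⇑f)^[n] x) ((⇑f)^[n] y) ^ β)
    (hlim : Tendsto (fun n : ℕ =>
        ‖(((coc (⇑f) A n y)⁻¹ : (V →L[ℝ] V)ˣ) : V →L[ℝ] V)‖ *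
          ‖((coc (⇑f) A n x : (V →L[ℝ] V)ˣ) : V →L[ℝ] V)‖ *
          dist ((⇑f)^[n] x) ((⇑f)^[n] y) ^ β) atTop (𝓝 0)) :
    H x y = H' x y := by
  obtain ⟨-, -, h3⟩ := hH
  obtain ⟨-, -, h3'⟩ := hH'
  have key : ∀ n : ℕ, ‖((H x y : (V →L[ℝ] V)ˣ) : V →L[ℝ] V) - (H' x y : (V →L[ℝ] V)ˣ)‖ ≤
      2 * K * (‖(((coc (⇑f) A n y)⁻¹ : (V →L[ℝ] V)ˣ) : V →L[ℝ] V)‖ *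
        ‖((coc (⇑f) A n x : (V →L[ℝ] V)ˣ) : V →L[ℝ] V)‖ *
        dist ((⇑f)^[n] x) ((⇑f)^[n] y) ^ β) := by
    intro n
    have e1 := h3 x y hy n
    have e2 := h3' x y hy n
    have hdiff : ((H x y : (V →L[ℝ] V)ˣ) : V →L[ℝ] V) - (H' x y : (V →L[ℝ] V)ˣ) =
        (((coc (⇑f) A n y)⁻¹ : (V →L[ℝ] V)ˣ) : V →L[ℝ] V) *
          (((H ((⇑f)^[n] x) ((⇑f)^[n] y) : (V →L[ℝ] V)ˣ) : V →L[ℝ] V) -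
            ((H' ((⇑f)^[n] x) ((⇑f)^[n] y) : (V →L[ℝ] V)ˣ) : V →L[ℝ] V)) *
          ((coc (⇑f) A n x : (V →L[ℝ] V)ˣ) : V →L[ℝ] V) := by
      rw [e1, e2]
      simp [Units.val_mul, mul_sub, sub_mul, mul_assoc]
    have hmid : ‖((H ((⇑f)^[n] x) ((⇑f)^[n] y) : (V →L[ℝ] V)ˣ) : V →L[ℝ] V) -
        ((H' ((⇑f)^[n] x) ((⇑f)^[n] y) : (V →L[ℝ] V)ˣ) : V →L[ℝ] V)‖ ≤
        2 * K * dist ((⇑f)^[n] x) ((⇑f)^[n] y) ^ β := by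
      have := norm_sub_le_of_le (hHb n) (hH'b n)
      calc ‖((H ((⇑f)^[n] x) ((⇑f)^[n] y) : (V →L[ℝ] V)ˣ) : V →L[ℝ] V) -
          ((H' ((⇑f)^[n] x) ((⇑f)^[n] y) : (V →L[ℝ] V)ˣ) : V →L[ℝ] V)‖
          = ‖(((H ((⇑f)^[n] x) ((⇑f)^[n] y) : (V →L[ℝ] V)ˣ) : V →L[ℝ] V) - 1) -
            (((H' ((⇑f)^[n] x) ((⇑f)^[n] y) : (V →L[ℝ] V)ˣ) : V →L[ℝ] V) - 1)‖ := by
            rw [sub_sub_sub_cancel_right]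
        _ ≤ K * dist ((⇑f)^[n] x) ((⇑f)^[n] y) ^ β + K * dist ((⇑f)^[n] x) ((⇑f)^[n] y) ^ β :=
            norm_sub_le_of_le (hHb n) (hH'b n)
        _ = 2 * K * dist ((⇑f)^[n] x) ((⇑f)^[n] y) ^ β := by ring
    rw [hdiff]
    calc ‖_ * _ * _‖ ≤ ‖(((coc (⇑f) A n y)⁻¹ : (V →L[ℝ] V)ˣ) : V →L[ℝ] V)‖ *
          ‖((H ((⇑f)^[n] x) ((⇑f)^[n] y) : (V →L[ℝ] V)ˣ) : V →L[ℝ] V) -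
            ((H' ((⇑f)^[n] x) ((⇑f)^[n] y) : (V →L[ℝ] V)ˣ) : V →L[ℝ] V)‖ *
          ‖((coc (⇑f) A n x : (V →L[ℝ] V)ˣ) : V →L[ℝ] V)‖ :=
        le_trans (norm_mul_le _ _) (by gcongr; exact norm_mul_le _ _)
      _ ≤ ‖(((coc (⇑f) A n y)⁻¹ : (V →L[ℝ] V)ˣ) : V →L[ℝ] V)‖ *
          (2 * K * dist ((⇑f)^[n] x) ((⇑f)^[n] y) ^ β) *
          ‖((coc (⇑f) A n x : (V →L[ℝ] V)ˣ) : V →L[ℝ] V)‖ := by gcongr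
      _ = 2 * K * (‖(((coc (⇑f) A n y)⁻¹ : (V →L[ℝ] V)ˣ) : V →L[ℝ] V)‖ *
          ‖((coc (⇑f) A n x : (V →L[ℝ] V)ˣ) : V →L[ℝ] V)‖ *
          dist ((⇑f)^[n] x) ((⇑f)^[n] y) ^ β) := by ring
  have hlim2 := hlim.const_mul (2 * K)
  rw [mul_zero] at hlim2
  have hle : ‖((H x y : (V →L[ℝ] V)ˣ) : V →L[ℝ] V) - (H' x y : (V →L[ℝ] V)ˣ)‖ ≤ 0 :=
    le_of_tendsto_of_tendsto' tendsto_const_nhds hlim2 key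
  have hz : ((H x y : (V →L[ℝ] V)ˣ) : V →L[ℝ] V) = (H' x y : (V →L[ℝ] V)ˣ) := by
    have := le_antisymm hle (norm_nonneg _)
    rwa [norm_eq_zero, sub_eq_zero] at this
  exact Units.ext hz
end

section
/- Let f be a homeomorphism of a metric space M, let A, B : M → GL(V), and let C : M → GL(V) satisfy A(z) = C(fz) ∘ B(z) ∘ C(z)⁻¹ for all z ∈ M. Fix x, y ∈ M and suppose that the limits H^A = limₙ (Aⁿ_y)⁻¹∘Aⁿ_x and H^B = limₙ (Bⁿ_y)⁻¹∘Bⁿ_x exist in operator norm, and that there is a sequence nᵢ → ∞ along which ‖C(f^{nᵢ}y)⁻¹ ∘ C(f^{nᵢ}x) − Id‖ · ‖(B^{nᵢ}_y)⁻¹‖ · ‖B^{nᵢ}_x‖ → 0. Then H^A = C(y) ∘ H^B ∘ C(x)⁻¹. -/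
open Filter Topology

lemma coc_conj {M : Type*} {V : Type*} [NormedAddCommGroup V] [NormedSpace ℝ V]
    (f : M → M) (A B C : M → (V →L[ℝ] V)ˣ)
    (hC : ∀ z : M, A z = C (f z) * B z * (C z)⁻¹) :
    ∀ (n : ℕ) (z : M), coc f A n z = C (f^[n] z) * coc f B n z * (C z)⁻¹ := by
  intro n
  induction n with
  | zero => intro z; simp [coc]
  | succ n ih =>
    intro z
    rw [coc, coc, ih (f z), hC z, Function.iterate_succ_apply]
    group

/-- If `C` is a conjugacy between cocycles `A` and `B`, the limits
`H^A = limₙ (Aⁿ_y)⁻¹∘Aⁿ_x` and `H^B = limₙ (Bⁿ_y)⁻¹∘Bⁿ_x` exist, and along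
some sequence `nᵢ → ∞` one has
`‖C(f^{nᵢ}y)⁻¹∘C(f^{nᵢ}x) − Id‖·‖(B^{nᵢ}_y)⁻¹‖·‖B^{nᵢ}_x‖ → 0`, then
`H^A = C(y) ∘ H^B ∘ C(x)⁻¹`. -/
theorem stmt_6 {V : Type*} [NormedAddCommGroup V] [NormedSpace ℝ V] [CompleteSpace V]
    {M : Type*} [MetricSpace M] (f : M ≃ₜ M) (A B C : M → (V →L[ℝ] V)ˣ)
    (hC : ∀ z : M, A z = C (f z) * B z * (C z)⁻¹)
    (x y : M) (HA HB : V →L[ℝ] V)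
    (hHA : Tendsto (fun n : ℕ =>
        (((coc (⇑f) A n y)⁻¹ * coc (⇑f) A n x : (V →L[ℝ] V)ˣ) : V →L[ℝ] V))
      atTop (𝓝 HA))
    (hHB : Tendsto (fun n : ℕ =>
        (((coc (⇑f) B n y)⁻¹ * coc (⇑f) B n x : (V →L[ℝ] V)ˣ) : V →L[ℝ] V))
      atTop (𝓝 HB))
    (ni : ℕ → ℕ) (hni : Tendsto ni atTop atTop)
    (hΔ : Tendsto (fun i : ℕ =>
        ‖(((C ((⇑f)^[ni i] y))⁻¹ * C ((⇑f)^[ni i] x) : (V →L[ℝ] V)ˣ) : V →L[ℝ] V) - 1‖ *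
          ‖(((coc (⇑f) B (ni i) y)⁻¹ : (V →L[ℝ] V)ˣ) : V →L[ℝ] V)‖ *
          ‖((coc (⇑f) B (ni i) x : (V →L[ℝ] V)ˣ) : V →L[ℝ] V)‖) atTop (𝓝 0)) :
    HA = ((C y : (V →L[ℝ] V)ˣ) : V →L[ℝ] V) * HB *
      (((C x)⁻¹ : (V →L[ℝ] V)ˣ) : V →L[ℝ] V) := by
  set Cy : V →L[ℝ] V := ((C y : (V →L[ℝ] V)ˣ) : V →L[ℝ] V) with hCy
  set Cxi : V →L[ℝ] V := (((C x)⁻¹ : (V →L[ℝ] V)ˣ) : V →L[ℝ] V) with hCxi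
  -- define things
  have key : ∀ n : ℕ,
      (((coc (⇑f) A n y)⁻¹ * coc (⇑f) A n x : (V →L[ℝ] V)ˣ) : V →L[ℝ] V)
        - Cy * (((coc (⇑f) B n y)⁻¹ * coc (⇑f) B n x : (V →L[ℝ] V)ˣ) : V →L[ℝ] V) * Cxi
      = Cy * (((coc (⇑f) B n y)⁻¹ : (V →L[ℝ] V)ˣ) : V →L[ℝ] V)
          * ((((C ((⇑f)^[n] y))⁻¹ * C ((⇑f)^[n] x) : (V →L[ℝ] V)ˣ) : V →L[ℝ] V) - 1)
          * ((coc (⇑f) B n x : (V →L[ℝ] V)ˣ) : V →L[ℝ] V) * Cxi := by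
    intro n
    have h1 : ((coc (⇑f) A n y)⁻¹ * coc (⇑f) A n x : (V →L[ℝ] V)ˣ)
        = C y * (coc (⇑f) B n y)⁻¹ * ((C ((⇑f)^[n] y))⁻¹ * C ((⇑f)^[n] x))
          * coc (⇑f) B n x * (C x)⁻¹ := by
      rw [coc_conj (⇑f) A B C hC n y, coc_conj (⇑f) A B C hC n x]
      group
    rw [h1]
    push_cast [Units.val_mul, Units.val_inv_eq_inv_val]
    rw [hCy, hCxi]
    noncomm_ring
  have hbound : Tendsto (fun i : ℕ =>
      (((coc (⇑f) A (ni i) y)⁻¹ * coc (⇑f) A (ni i) x : (V →L[ℝ] V)ˣ) : V →L[ℝ] V)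
        - Cy * (((coc (⇑f) B (ni i) y)⁻¹ * coc (⇑f) B (ni i) x : (V →L[ℝ] V)ˣ) : V →L[ℝ] V) * Cxi)
      atTop (𝓝 0) := by
    apply squeeze_zero_norm (a := fun i =>
      ‖Cy‖ * ‖Cxi‖ * (‖(((C ((⇑f)^[ni i] y))⁻¹ * C ((⇑f)^[ni i] x) : (V →L[ℝ] V)ˣ) : V →L[ℝ] V) - 1‖ *
          ‖(((coc (⇑f) B (ni i) y)⁻¹ : (V →L[ℝ] V)ˣ) : V →L[ℝ] V)‖ *
          ‖((coc (⇑f) B (ni i) x : (V →L[ℝ] V)ˣ) : V →L[ℝ] V)‖))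
    · intro i
      rw [key (ni i)]
      calc ‖Cy * (((coc (⇑f) B (ni i) y)⁻¹ : (V →L[ℝ] V)ˣ) : V →L[ℝ] V)
          * ((((C ((⇑f)^[ni i] y))⁻¹ * C ((⇑f)^[ni i] x) : (V →L[ℝ] V)ˣ) : V →L[ℝ] V) - 1)
          * ((coc (⇑f) B (ni i) x : (V →L[ℝ] V)ˣ) : V →L[ℝ] V) * Cxi‖
          ≤ ‖Cy‖ * ‖(((coc (⇑f) B (ni i) y)⁻¹ : (V →L[ℝ] V)ˣ) : V →L[ℝ] V)‖
            * ‖(((C ((⇑f)^[ni i] y))⁻¹ * C ((⇑f)^[ni i] x) : (V →L[ℝ] V)ˣ) : V →L[ℝ] V) - 1‖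
            * ‖((coc (⇑f) B (ni i) x : (V →L[ℝ] V)ˣ) : V →L[ℝ] V)‖ * ‖Cxi‖ := by
            refine le_trans (ContinuousLinearMap.opNorm_comp_le _ _) ?_
            gcongr
            refine le_trans (ContinuousLinearMap.opNorm_comp_le _ _) ?_
            gcongr
            refine le_trans (ContinuousLinearMap.opNorm_comp_le _ _) ?_
            gcongr
            exact ContinuousLinearMap.opNorm_comp_le _ _
        _ = _ := by ring
    · have := hΔ.const_mul (‖Cy‖ * ‖Cxi‖)
      simpa using this
  have hlim1 : Tendsto (fun i : ℕ =>
      (((coc (⇑f) A (ni i) y)⁻¹ * coc (⇑f) A (ni i) x : (V →L[ℝ] V)ˣ) : V →L[ℝ] V)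
        - Cy * (((coc (⇑f) B (ni i) y)⁻¹ * coc (⇑f) B (ni i) x : (V →L[ℝ] V)ˣ) : V →L[ℝ] V) * Cxi)
      atTop (𝓝 (HA - Cy * HB * Cxi)) := by
    exact ((hHA.comp hni).sub (((hHB.comp hni).const_mul Cy).mul_const Cxi))
  have := tendsto_nhds_unique hlim1 hbound
  exact sub_eq_zero.mp this
end

section
/- Let f be a homeomorphism of a metric space M, let A, B : M → GL(V) generate cocycles, and let C : M → GL(V) be a conjugacy between A and B such that ‖C(z) − C(w)‖ ≤ K₁·dist(z,w)^β for all z, w ∈ M and sup_{z ∈ M} ‖C(z)⁻¹‖ ≤ M₀ < ∞. Fix x, y ∈ M and suppose that the limits H^A_{x,y} = limₙ (Aⁿ_y)⁻¹∘Aⁿ_x and H^B_{x,y} = limₙ (Bⁿ_y)⁻¹∘Bⁿ_x exist in operator norm, and that there exist L > 0 and θ ∈ (0,1) such that ‖(Bⁿ_y)⁻¹‖·‖Bⁿ_x‖·dist(fⁿx, fⁿy)^β ≤ L·θⁿ for all n ∈ ℕ. Then H^A_{x,y} = C(y) ∘ H^B_{x,y} ∘ C(x)⁻¹. -/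
open Filter Topology

/-- A `β`-Hölder conjugacy `C` (with uniformly bounded inverse) between cocycles
`A` and `B` intertwines the standard holonomies: if the limits
`H^A_{x,y} = limₙ (Aⁿ_y)⁻¹∘Aⁿ_x` and `H^B_{x,y} = limₙ (Bⁿ_y)⁻¹∘Bⁿ_x` exist and
`‖(Bⁿ_y)⁻¹‖·‖Bⁿ_x‖·dist(fⁿx,fⁿy)^β ≤ L·θⁿ`, then
`H^A_{x,y} = C(y) ∘ H^B_{x,y} ∘ C(x)⁻¹`. -/
theorem stmt_7 {V : Type*} [NormedAddCommGroup V] [NormedSpace ℝ V] [CompleteSpace V]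
    {M : Type*} [MetricSpace M] (f : M ≃ₜ M) (A B C : M → (V →L[ℝ] V)ˣ)
    (hC : ∀ z : M, A z = C (f z) * B z * (C z)⁻¹)
    (K₁ β M₀ : ℝ) (hK₁ : 0 < K₁) (hβ : 0 < β) (hM₀ : 0 < M₀)
    (hHold : ∀ z w : M,
      ‖((C z : (V →L[ℝ] V)ˣ) : V →L[ℝ] V) - ((C w : (V →L[ℝ] V)ˣ) : V →L[ℝ] V)‖ ≤
        K₁ * dist z w ^ β)
    (hCinv : ∀ z : M, ‖(((C z)⁻¹ : (V →L[ℝ] V)ˣ) : V →L[ℝ] V)‖ ≤ M₀)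
    (x y : M) (HA HB : V →L[ℝ] V)
    (hHA : Tendsto (fun n : ℕ =>
        (((coc (⇑f) A n y)⁻¹ * coc (⇑f) A n x : (V →L[ℝ] V)ˣ) : V →L[ℝ] V))
      atTop (𝓝 HA))
    (hHB : Tendsto (fun n : ℕ =>
        (((coc (⇑f) B n y)⁻¹ * coc (⇑f) B n x : (V →L[ℝ] V)ˣ) : V →L[ℝ] V))
      atTop (𝓝 HB))
    (L θ : ℝ) (hL : 0 < L) (hθ0 : 0 < θ) (hθ1 : θ < 1)
    (hdom : ∀ n : ℕ,
      ‖(((coc (⇑f) B n y)⁻¹ : (V →L[ℝ] V)ˣ) : V →L[ℝ] V)‖ *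
        ‖((coc (⇑f) B n x : (V →L[ℝ] V)ˣ) : V →L[ℝ] V)‖ *
        dist ((⇑f)^[n] x) ((⇑f)^[n] y) ^ β ≤ L * θ ^ n) :
    HA = ((C y : (V →L[ℝ] V)ˣ) : V →L[ℝ] V) * HB *
      (((C x)⁻¹ : (V →L[ℝ] V)ˣ) : V →L[ℝ] V) := by
  set a : V →L[ℝ] V := ((C y : (V →L[ℝ] V)ˣ) : V →L[ℝ] V) with ha
  set c : V →L[ℝ] V := (((C x)⁻¹ : (V →L[ℝ] V)ˣ) : V →L[ℝ] V) with hc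
  set g : ℕ → V →L[ℝ] V := fun n =>
    (((coc (⇑f) A n y)⁻¹ * coc (⇑f) A n x : (V →L[ℝ] V)ˣ) : V →L[ℝ] V) with hg
  set h : ℕ → V →L[ℝ] V := fun n =>
    a * (((coc (⇑f) B n y)⁻¹ * coc (⇑f) B n x : (V →L[ℝ] V)ˣ) : V →L[ℝ] V) * c with hh
  have hgh : ∀ n, g n - h n =
      a * (((coc (⇑f) B n y)⁻¹ : (V →L[ℝ] V)ˣ) : V →L[ℝ] V) *
        ((((C (f^[n] y))⁻¹ : (V →L[ℝ] V)ˣ) : V →L[ℝ] V) *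
          (((C (f^[n] x) : (V →L[ℝ] V)ˣ) : V →L[ℝ] V) -
            ((C (f^[n] y) : (V →L[ℝ] V)ˣ) : V →L[ℝ] V))) *
        ((coc (⇑f) B n x : (V →L[ℝ] V)ˣ) : V →L[ℝ] V) * c := by
    intro n
    have e1 : coc (⇑f) A n y = C (f^[n] y) * coc (⇑f) B n y * (C y)⁻¹ :=
      coc_conj f A B C hC n y
    have e2 : coc (⇑f) A n x = C (f^[n] x) * coc (⇑f) B n x * (C x)⁻¹ :=
      coc_conj f A B C hC n x
    have e3 : (coc (⇑f) A n y)⁻¹ * coc (⇑f) A n x =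
        C y * ((coc (⇑f) B n y)⁻¹ * ((C (f^[n] y))⁻¹ * C (f^[n] x)) *
          coc (⇑f) B n x) * (C x)⁻¹ := by
      rw [e1, e2]; group
    simp only [hg, hh, e3]
    push_cast [Units.val_mul]
    have huw : (((C (f^[n] y))⁻¹ : (V →L[ℝ] V)ˣ) : V →L[ℝ] V) *
        ((C (f^[n] y) : (V →L[ℝ] V)ˣ) : V →L[ℝ] V) = 1 := by
      rw [← Units.val_mul]; simp
    simp only [mul_sub, sub_mul, huw]
    noncomm_ring
  have hbound : ∀ n, ‖g n - h n‖ ≤ (‖a‖ * M₀ * M₀ * K₁ * L) * θ ^ n := by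
    intro n
    rw [hgh n]
    set binv := (((coc (⇑f) B n y)⁻¹ : (V →L[ℝ] V)ˣ) : V →L[ℝ] V)
    set bn := ((coc (⇑f) B n x : (V →L[ℝ] V)ˣ) : V →L[ℝ] V)
    set u := (((C (f^[n] y))⁻¹ : (V →L[ℝ] V)ˣ) : V →L[ℝ] V)
    set d := ((C (f^[n] x) : (V →L[ℝ] V)ˣ) : V →L[ℝ] V) -
      ((C (f^[n] y) : (V →L[ℝ] V)ˣ) : V →L[ℝ] V)
    have hd : ‖d‖ ≤ K₁ * dist ((⇑f)^[n] x) ((⇑f)^[n] y) ^ β := hHold _ _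
    calc ‖a * binv * (u * d) * bn * c‖
        ≤ ‖a‖ * ‖binv‖ * (‖u‖ * ‖d‖) * ‖bn‖ * ‖c‖ := by
          calc ‖a * binv * (u * d) * bn * c‖
              ≤ ‖a * binv * (u * d) * bn‖ * ‖c‖ := norm_mul_le _ _
            _ ≤ ‖a * binv * (u * d)‖ * ‖bn‖ * ‖c‖ := by gcongr; exact norm_mul_le _ _
            _ ≤ ‖a * binv‖ * ‖u * d‖ * ‖bn‖ * ‖c‖ := by gcongr; exact norm_mul_le _ _
            _ ≤ ‖a‖ * ‖binv‖ * (‖u‖ * ‖d‖) * ‖bn‖ * ‖c‖ := by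
                gcongr <;> exact norm_mul_le _ _
      _ ≤ ‖a‖ * ‖binv‖ * (M₀ * (K₁ * dist ((⇑f)^[n] x) ((⇑f)^[n] y) ^ β)) * ‖bn‖ * M₀ := by
          gcongr
          all_goals first | exact hCinv _ | exact hd | positivity
      _ = (‖a‖ * M₀ * M₀ * K₁) *
            (‖binv‖ * ‖bn‖ * dist ((⇑f)^[n] x) ((⇑f)^[n] y) ^ β) := by ring
      _ ≤ (‖a‖ * M₀ * M₀ * K₁) * (L * θ ^ n) :=
          mul_le_mul_of_nonneg_left (hdom n) (by positivity)
      _ = (‖a‖ * M₀ * M₀ * K₁ * L) * θ ^ n := by ring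
  have hdiff0 : Tendsto (fun n => g n - h n) atTop (𝓝 0) := by
    have hθ : Tendsto (fun n : ℕ => (‖a‖ * M₀ * M₀ * K₁ * L) * θ ^ n) atTop (𝓝 0) := by
      have := tendsto_pow_atTop_nhds_zero_of_lt_one hθ0.le hθ1
      simpa using this.const_mul (‖a‖ * M₀ * M₀ * K₁ * L)
    exact squeeze_zero_norm hbound hθ
  have hhlim : Tendsto h atTop (𝓝 (a * HB * c)) := by
    exact ((hHB.const_mul a).mul_const c)
  have hglim : Tendsto g atTop (𝓝 (a * HB * c)) := by
    have := hhlim.add hdiff0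
    simpa [add_sub_cancel] using (hdiff0.add hhlim).congr (fun n => by abel)
  exact tendsto_nhds_unique hHA hglim
end

section
/- Let f be an accessible homeomorphism of a metric space M, let A, B : M → GL(V) generate cocycles equipped with stable and unstable holonomies H^A and H^B, and let C₁ and C₂ be conjugacies between A and B that both intertwine H^A and H^B. If C₁(x₀) = C₂(x₀) for some point x₀ ∈ M, then C₁(x) = C₂(x) for all x ∈ M. -/
open Filter Topology

/-- The unstable set `Wᵘ(x) = {y : dist(f⁻ⁿx, f⁻ⁿy) → 0}`. -/
def unstableSet {M : Type*} [MetricSpace M] (f : M ≃ₜ M) (x : M) : Set M :=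
  {y | Tendsto (fun n : ℕ => dist ((⇑f.symm)^[n] x) ((⇑f.symm)^[n] y)) atTop (𝓝 0)}

/-- An unstable holonomy for the cocycle generated by `A`: a family `H x y ∈ GL(V)`
(relevant for `y ∈ Wᵘ(x)`) with `H x x = Id`, `H y z ∘ H x y = H x z`, and
`H x y = (A⁻ⁿ_y)⁻¹ ∘ H (f⁻ⁿx) (f⁻ⁿy) ∘ A⁻ⁿ_x` for all `n`, where
`A⁻ⁿ_x = (Aⁿ_{f⁻ⁿx})⁻¹`. -/
def IsUnstableHolonomy {M : Type*} [MetricSpace M] {V : Type*} [NormedAddCommGroup V]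
    [NormedSpace ℝ V] (f : M ≃ₜ M) (A : M → (V →L[ℝ] V)ˣ)
    (H : M → M → (V →L[ℝ] V)ˣ) : Prop :=
  (∀ x, H x x = 1) ∧
  (∀ x y z, y ∈ unstableSet f x → z ∈ unstableSet f y → H y z * H x y = H x z) ∧
  (∀ x y, y ∈ unstableSet f x → ∀ n : ℕ,
    H x y = coc (⇑f) A n ((⇑f.symm)^[n] y) * H ((⇑f.symm)^[n] x) ((⇑f.symm)^[n] y) *
      (coc (⇑f) A n ((⇑f.symm)^[n] x))⁻¹)

/-- An `su`-path starting at `x` is encoded by a list of labelled steps: step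
`(true, y)` goes to `y ∈ Wˢ` of the current point, step `(false, y)` goes to
`y ∈ Wᵘ` of the current point. `suChain f x p` says the list `p` is a valid
`su`-path starting at `x`. -/
def suChain {M : Type*} [MetricSpace M] (f : M ≃ₜ M) : M → List (Bool × M) → Prop
  | _, [] => True
  | x, (b, y) :: p => (if b then y ∈ stableSet (⇑f) x else y ∈ unstableSet f x) ∧ suChain f y p

/-- The endpoint of an `su`-path starting at `x` encoded by the list `p`. -/
def chainEnd {M : Type*} : M → List (Bool × M) → M
  | x, [] => x
  | _, (_, y) :: p => chainEnd y p

/-- The weight `H^P = H_{x_{k−1},x_k} ∘ ⋯ ∘ H_{x₀,x₁}` of an `su`-path with respect to a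
pair `(Hs, Hu)` of a stable and an unstable holonomy. -/
noncomputable def chainWeight {M : Type*} {V : Type*} [NormedAddCommGroup V]
    [NormedSpace ℝ V] (Hs Hu : M → M → (V →L[ℝ] V)ˣ) :
    M → List (Bool × M) → (V →L[ℝ] V)ˣ
  | _, [] => 1
  | x, (b, y) :: p => chainWeight Hs Hu y p * (if b then Hs x y else Hu x y)

/-!
Intertwining gives `C y = H^A_{x,y} * C x * (H^B_{x,y})⁻¹` whenever `y ∈ Wˢ(x) ∪ Wᵘ(x)`, so
the set where `C₁` and `C₂` agree is saturated by stable and unstable sets; by accessibility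
it is all of `M`.
-/

theorem chainEnd_mem_of_suChain {M : Type*} [MetricSpace M] {f : M ≃ₜ M} {S : Set M}
    (hs : ∀ x ∈ S, stableSet (⇑f) x ⊆ S) (hu : ∀ x ∈ S, unstableSet f x ⊆ S)
    {x : M} {p : List (Bool × M)} (hp : suChain f x p) (hx : x ∈ S) : chainEnd x p ∈ S := by
  induction p generalizing x with
  | nil => exact hx
  | cons step p ih =>
    obtain ⟨b, y⟩ := step
    obtain ⟨hstep, hp⟩ := hp
    refine ih hp ?_
    cases b
    · exact hu x hx hstep
    · exact hs x hx hstep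

theorem eq_univ_of_accessible {M : Type*} [MetricSpace M] {f : M ≃ₜ M}
    (hacc : ∀ x y : M, ∃ p : List (Bool × M), suChain f x p ∧ chainEnd x p = y)
    {S : Set M} {x₀ : M} (h₀ : x₀ ∈ S)
    (hs : ∀ x ∈ S, stableSet (⇑f) x ⊆ S) (hu : ∀ x ∈ S, unstableSet f x ⊆ S) :
    S = Set.univ :=
  Set.eq_univ_of_forall fun y ↦ by
    obtain ⟨p, hp, rfl⟩ := hacc x₀ y
    exact chainEnd_mem_of_suChain hs hu hp h₀

theorem eq_of_mul_mul_inv_eq {G : Type*} [Group G] {a b c₁ c₂ d : G}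
    (h₁ : a = c₁ * b * d⁻¹) (h₂ : a = c₂ * b * d⁻¹) : c₁ = c₂ :=
  mul_right_cancel (mul_right_cancel (h₁.symm.trans h₂))

theorem stmt_9_general {V : Type*} [NormedAddCommGroup V] [NormedSpace ℝ V]
    {M : Type*} [MetricSpace M] (f : M ≃ₜ M)
    (HAs HAu HBs HBu : M → M → (V →L[ℝ] V)ˣ)
    (hacc : ∀ x y : M, ∃ p : List (Bool × M), suChain f x p ∧ chainEnd x p = y)
    (C₁ C₂ : M → (V →L[ℝ] V)ˣ)
    (hIs₁ : ∀ x y : M, y ∈ stableSet (⇑f) x → HAs x y = C₁ y * HBs x y * (C₁ x)⁻¹)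
    (hIu₁ : ∀ x y : M, y ∈ unstableSet f x → HAu x y = C₁ y * HBu x y * (C₁ x)⁻¹)
    (hIs₂ : ∀ x y : M, y ∈ stableSet (⇑f) x → HAs x y = C₂ y * HBs x y * (C₂ x)⁻¹)
    (hIu₂ : ∀ x y : M, y ∈ unstableSet f x → HAu x y = C₂ y * HBu x y * (C₂ x)⁻¹)
    (x₀ : M) (h₀ : C₁ x₀ = C₂ x₀) :
    ∀ x : M, C₁ x = C₂ x := by
  have hagree : {x | C₁ x = C₂ x} = Set.univ := by
    refine eq_univ_of_accessible hacc h₀ ?_ ?_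
    · intro x (hx : C₁ x = C₂ x) y hy
      exact eq_of_mul_mul_inv_eq (hIs₁ x y hy) (hx ▸ hIs₂ x y hy)
    · intro x (hx : C₁ x = C₂ x) y hy
      exact eq_of_mul_mul_inv_eq (hIu₁ x y hy) (hx ▸ hIu₂ x y hy)
  exact Set.eq_univ_iff_forall.mp hagree

/-- If `f` is accessible and `C₁`, `C₂` are conjugacies between cocycles `A` and `B`
both of which intertwine the holonomies `H^A` and `H^B`, and `C₁(x₀) = C₂(x₀)` at
some point `x₀`, then `C₁ = C₂` everywhere. -/
theorem stmt_9 {V : Type*} [NormedAddCommGroup V] [NormedSpace ℝ V] [CompleteSpace V]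
    {M : Type*} [MetricSpace M] (f : M ≃ₜ M) (A B : M → (V →L[ℝ] V)ˣ)
    (HAs HAu HBs HBu : M → M → (V →L[ℝ] V)ˣ)
    (hHAs : IsStableHolonomy (⇑f) A HAs) (hHAu : IsUnstableHolonomy f A HAu)
    (hHBs : IsStableHolonomy (⇑f) B HBs) (hHBu : IsUnstableHolonomy f B HBu)
    (hacc : ∀ x y : M, ∃ p : List (Bool × M), suChain f x p ∧ chainEnd x p = y)
    (C₁ C₂ : M → (V →L[ℝ] V)ˣ)
    (hC₁ : ∀ z : M, A z = C₁ (f z) * B z * (C₁ z)⁻¹)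
    (hC₂ : ∀ z : M, A z = C₂ (f z) * B z * (C₂ z)⁻¹)
    (hIs₁ : ∀ x y : M, y ∈ stableSet (⇑f) x → HAs x y = C₁ y * HBs x y * (C₁ x)⁻¹)
    (hIu₁ : ∀ x y : M, y ∈ unstableSet f x → HAu x y = C₁ y * HBu x y * (C₁ x)⁻¹)
    (hIs₂ : ∀ x y : M, y ∈ stableSet (⇑f) x → HAs x y = C₂ y * HBs x y * (C₂ x)⁻¹)
    (hIu₂ : ∀ x y : M, y ∈ unstableSet f x → HAu x y = C₂ y * HBu x y * (C₂ x)⁻¹)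
    (x₀ : M) (h₀ : C₁ x₀ = C₂ x₀) :
    ∀ x : M, C₁ x = C₂ x :=
  stmt_9_general f HAs HAu HBs HBu hacc C₁ C₂ hIs₁ hIu₁ hIs₂ hIu₂ x₀ h₀
end

section
/- Let f be an accessible homeomorphism of a metric space M, and let A, B : M → GL(V) generate cocycles equipped with stable and unstable holonomies H^A and H^B. Suppose there exist x₀ ∈ M and C₀ ∈ GL(V) such that: (i) H^{A,P}_{x₀} = C₀ ∘ H^{B,P}_{x₀} ∘ C₀⁻¹ for every su-cycle P based at x₀; and (ii) A(x₀) = C_{fx₀} ∘ B(x₀) ∘ C₀⁻¹, where C_{fx₀} = H^{A,Q}_{x₀,fx₀} ∘ C₀ ∘ (H^{B,Q}_{x₀,fx₀})⁻¹ for some su-path Q from x₀ to fx₀. Then there exists a map C : M → GL(V) with C(x₀) = C₀ such that A(x) = C(fx) ∘ B(x) ∘ C(x)⁻¹ for all x ∈ M and C intertwines H^A and H^B. -/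
open Filter Topology

/-!
Fix, for every `x`, an `su`-path `p` from `x₀` to `x` and set
`C(x) = H^{A,p} ∘ C₀ ∘ (H^{B,p})⁻¹`. Two paths `p, q` with the same endpoint give the same value,
because `p` followed by `q` backwards is an `su`-cycle at `x₀`, to which (i) applies.
Appending one stable or unstable step to `p` shows that `C` intertwines the holonomies. The path
`Q` followed by the image of `p` under `f` ends at `fx`; by (ii) and the equivariance
`H_{fx,fy} = A(y) ∘ H_{x,y} ∘ A(x)⁻¹` of the holonomies it yields `C(fx) = A(x) ∘ C(x) ∘ B(x)⁻¹`.
-/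

section SuPaths

variable {V : Type*} [NormedAddCommGroup V] [NormedSpace ℝ V] {M : Type*}

lemma coc_one (f : M → M) (A : M → (V →L[ℝ] V)ˣ) (x : M) : coc f A 1 x = A x :=
  one_mul _

def stepWeight (Hs Hu : M → M → (V →L[ℝ] V)ˣ) (b : Bool) (x y : M) : (V →L[ℝ] V)ˣ :=
  if b then Hs x y else Hu x y

lemma stepWeight_true (Hs Hu : M → M → (V →L[ℝ] V)ˣ) (x y : M) :
    stepWeight Hs Hu true x y = Hs x y :=
  rfl

lemma stepWeight_false (Hs Hu : M → M → (V →L[ℝ] V)ˣ) (x y : M) :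
    stepWeight Hs Hu false x y = Hu x y :=
  rfl

lemma chainWeight_cons (Hs Hu : M → M → (V →L[ℝ] V)ˣ) (x : M) (b : Bool) (y : M)
    (p : List (Bool × M)) :
    chainWeight Hs Hu x ((b, y) :: p) = chainWeight Hs Hu y p * stepWeight Hs Hu b x y :=
  rfl

lemma chainWeight_singleton (Hs Hu : M → M → (V →L[ℝ] V)ˣ) (x : M) (b : Bool) (y : M) :
    chainWeight Hs Hu x [(b, y)] = stepWeight Hs Hu b x y :=
  one_mul _

lemma chainEnd_append (x : M) (p q : List (Bool × M)) :
    chainEnd x (p ++ q) = chainEnd (chainEnd x p) q := by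
  induction p generalizing x with
  | nil => rfl
  | cons s p ih => exact ih s.2

lemma chainWeight_append (Hs Hu : M → M → (V →L[ℝ] V)ˣ) (x : M) (p q : List (Bool × M)) :
    chainWeight Hs Hu x (p ++ q) =
      chainWeight Hs Hu (chainEnd x p) q * chainWeight Hs Hu x p := by
  induction p generalizing x with
  | nil => exact (mul_one _).symm
  | cons s p ih => simp only [List.cons_append, chainWeight, chainEnd, ih s.2, mul_assoc]

def revChain : M → List (Bool × M) → List (Bool × M)
  | _, [] => []
  | x, (b, y) :: p => revChain y p ++ [(b, x)]

lemma chainEnd_revChain (x : M) (p : List (Bool × M)) :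
    chainEnd (chainEnd x p) (revChain x p) = x := by
  induction p generalizing x with
  | nil => rfl
  | cons s p ih => rw [revChain, chainEnd, chainEnd_append, ih]; rfl

def mapChain (g : M → M) (p : List (Bool × M)) : List (Bool × M) :=
  p.map (Prod.map id g)

lemma chainEnd_mapChain (g : M → M) (x : M) (p : List (Bool × M)) :
    chainEnd (g x) (mapChain g p) = g (chainEnd x p) := by
  induction p generalizing x with
  | nil => rfl
  | cons s p ih => exact ih s.2

variable [MetricSpace M]

lemma stableSet_symm {f : M → M} {x y : M} (h : y ∈ stableSet f x) : x ∈ stableSet f y := by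
  simpa [stableSet, dist_comm] using h

lemma unstableSet_symm {f : M ≃ₜ M} {x y : M} (h : y ∈ unstableSet f x) :
    x ∈ unstableSet f y := by
  simpa [unstableSet, dist_comm] using h

lemma map_mem_stableSet {f : M → M} {x y : M} (h : y ∈ stableSet f x) :
    f y ∈ stableSet f (f x) := by
  simpa [stableSet, Function.comp_def, Function.iterate_succ_apply] using
    h.comp (tendsto_add_atTop_nat 1)

lemma map_mem_unstableSet {f : M ≃ₜ M} {x y : M} (h : y ∈ unstableSet f x) :
    f y ∈ unstableSet f (f x) := by
  refine (tendsto_add_atTop_iff_nat 1).mp ?_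
  simpa [Function.iterate_succ_apply] using (show Tendsto _ _ _ from h)

def suStep (f : M ≃ₜ M) (b : Bool) (x y : M) : Prop :=
  if b then y ∈ stableSet f x else y ∈ unstableSet f x

lemma suStep.symm {f : M ≃ₜ M} {b : Bool} {x y : M} (h : suStep f b x y) : suStep f b y x := by
  cases b
  exacts [unstableSet_symm h, stableSet_symm h]

lemma suStep.map {f : M ≃ₜ M} {b : Bool} {x y : M} (h : suStep f b x y) :
    suStep f b (f x) (f y) := by
  cases b
  exacts [map_mem_unstableSet h, map_mem_stableSet h]

lemma suChain_cons {f : M ≃ₜ M} {x : M} {b : Bool} {y : M} {p : List (Bool × M)} :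
    suChain f x ((b, y) :: p) ↔ suStep f b x y ∧ suChain f y p :=
  Iff.rfl

lemma suChain_append {f : M ≃ₜ M} {x : M} {p q : List (Bool × M)} (hp : suChain f x p)
    (hq : suChain f (chainEnd x p) q) : suChain f x (p ++ q) := by
  induction p generalizing x with
  | nil => exact hq
  | cons s p ih => exact ⟨hp.1, ih hp.2 hq⟩

lemma suChain_revChain {f : M ≃ₜ M} {x : M} {p : List (Bool × M)} (hp : suChain f x p) :
    suChain f (chainEnd x p) (revChain x p) := by
  induction p generalizing x with
  | nil => trivial
  | cons s p ih =>
    obtain ⟨b, y⟩ := s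
    rw [suChain_cons] at hp
    refine suChain_append (ih hp.2) ?_
    change suChain f (chainEnd (chainEnd y p) (revChain y p)) [(b, x)]
    rw [chainEnd_revChain]
    exact ⟨hp.1.symm, trivial⟩

lemma suChain_mapChain {f : M ≃ₜ M} {x : M} {p : List (Bool × M)} (hp : suChain f x p) :
    suChain f (f x) (mapChain f p) := by
  induction p generalizing x with
  | nil => trivial
  | cons s p ih =>
    obtain ⟨b, y⟩ := s
    rw [suChain_cons] at hp
    exact ⟨hp.1.map, ih hp.2⟩

variable {f : M ≃ₜ M} {A : M → (V →L[ℝ] V)ˣ} {H Hs Hu : M → M → (V →L[ℝ] V)ˣ}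

lemma IsStableHolonomy.swap (hH : IsStableHolonomy f A H) {x y : M} (h : y ∈ stableSet f x) :
    H y x = (H x y)⁻¹ :=
  eq_inv_of_mul_eq_one_left (by rw [hH.2.1 x y x h (stableSet_symm h), hH.1])

lemma IsUnstableHolonomy.swap (hH : IsUnstableHolonomy f A H) {x y : M}
    (h : y ∈ unstableSet f x) : H y x = (H x y)⁻¹ :=
  eq_inv_of_mul_eq_one_left (by rw [hH.2.1 x y x h (unstableSet_symm h), hH.1])

lemma IsStableHolonomy.map_apply (hH : IsStableHolonomy f A H) {x y : M}
    (h : y ∈ stableSet f x) : H (f x) (f y) = A y * H x y * (A x)⁻¹ := by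
  rw [hH.2.2 x y h 1, coc_one, coc_one, Function.iterate_one]
  group

lemma IsUnstableHolonomy.map_apply (hH : IsUnstableHolonomy f A H) {x y : M}
    (h : y ∈ unstableSet f x) : H (f x) (f y) = A y * H x y * (A x)⁻¹ := by
  simpa [coc_one] using hH.2.2 (f x) (f y) (map_mem_unstableSet h) 1

lemma stepWeight_swap (hHs : IsStableHolonomy f A Hs) (hHu : IsUnstableHolonomy f A Hu)
    {b : Bool} {x y : M} (h : suStep f b x y) :
    stepWeight Hs Hu b y x = (stepWeight Hs Hu b x y)⁻¹ := by
  cases b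
  exacts [hHu.swap h, hHs.swap h]

lemma stepWeight_map (hHs : IsStableHolonomy f A Hs) (hHu : IsUnstableHolonomy f A Hu)
    {b : Bool} {x y : M} (h : suStep f b x y) :
    stepWeight Hs Hu b (f x) (f y) = A y * stepWeight Hs Hu b x y * (A x)⁻¹ := by
  cases b
  exacts [hHu.map_apply h, hHs.map_apply h]

lemma chainWeight_revChain (hHs : IsStableHolonomy f A Hs) (hHu : IsUnstableHolonomy f A Hu)
    {x : M} {p : List (Bool × M)} (hp : suChain f x p) :
    chainWeight Hs Hu (chainEnd x p) (revChain x p) = (chainWeight Hs Hu x p)⁻¹ := by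
  induction p generalizing x with
  | nil => exact inv_one.symm
  | cons s p ih =>
    obtain ⟨b, y⟩ := s
    rw [suChain_cons] at hp
    rw [revChain, chainEnd, chainWeight_append, chainEnd_revChain, ih hp.2, chainWeight_singleton,
      chainWeight_cons, stepWeight_swap hHs hHu hp.1, mul_inv_rev]

lemma chainWeight_mapChain (hHs : IsStableHolonomy f A Hs) (hHu : IsUnstableHolonomy f A Hu)
    {x : M} {p : List (Bool × M)} (hp : suChain f x p) :
    chainWeight Hs Hu (f x) (mapChain f p) =
      A (chainEnd x p) * chainWeight Hs Hu x p * (A x)⁻¹ := by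
  induction p generalizing x with
  | nil =>
    change 1 = A x * 1 * (A x)⁻¹
    group
  | cons s p ih =>
    obtain ⟨b, y⟩ := s
    rw [suChain_cons] at hp
    change chainWeight Hs Hu (f y) (mapChain f p) * stepWeight Hs Hu b (f x) (f y) = _
    rw [ih hp.2, stepWeight_map hHs hHu hp.1, chainEnd, chainWeight_cons]
    group

end SuPaths

section Conjugacy

variable {V : Type*} [NormedAddCommGroup V] [NormedSpace ℝ V] {M : Type*}

noncomputable def chainConj (HAs HAu HBs HBu : M → M → (V →L[ℝ] V)ˣ) (C₀ : (V →L[ℝ] V)ˣ)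
    (x : M) (p : List (Bool × M)) : (V →L[ℝ] V)ˣ :=
  chainWeight HAs HAu x p * C₀ * (chainWeight HBs HBu x p)⁻¹

variable {HAs HAu HBs HBu : M → M → (V →L[ℝ] V)ˣ} {C₀ : (V →L[ℝ] V)ˣ}

lemma chainConj_nil (x : M) : chainConj HAs HAu HBs HBu C₀ x [] = C₀ := by
  simp [chainConj, chainWeight]

lemma chainConj_append (x : M) (p q : List (Bool × M)) :
    chainConj HAs HAu HBs HBu C₀ x (p ++ q) =
      chainWeight HAs HAu (chainEnd x p) q * chainConj HAs HAu HBs HBu C₀ x p *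
        (chainWeight HBs HBu (chainEnd x p) q)⁻¹ := by
  simp only [chainConj, chainWeight_append]
  group

lemma chainConj_append_singleton (x : M) (p : List (Bool × M)) (b : Bool) (y : M) :
    chainConj HAs HAu HBs HBu C₀ x (p ++ [(b, y)]) =
      stepWeight HAs HAu b (chainEnd x p) y * chainConj HAs HAu HBs HBu C₀ x p *
        (stepWeight HBs HBu b (chainEnd x p) y)⁻¹ := by
  rw [chainConj_append, chainWeight_singleton, chainWeight_singleton]

variable [MetricSpace M] {f : M ≃ₜ M} {A B : M → (V →L[ℝ] V)ˣ} {x₀ : M}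

lemma chainConj_eq_of_chainEnd_eq (hHAs : IsStableHolonomy f A HAs)
    (hHAu : IsUnstableHolonomy f A HAu) (hHBs : IsStableHolonomy f B HBs)
    (hHBu : IsUnstableHolonomy f B HBu)
    (hcyc : ∀ p : List (Bool × M), suChain f x₀ p → chainEnd x₀ p = x₀ →
      chainWeight HAs HAu x₀ p = C₀ * chainWeight HBs HBu x₀ p * C₀⁻¹)
    {p q : List (Bool × M)} (hp : suChain f x₀ p) (hq : suChain f x₀ q)
    (hpq : chainEnd x₀ p = chainEnd x₀ q) :
    chainConj HAs HAu HBs HBu C₀ x₀ p = chainConj HAs HAu HBs HBu C₀ x₀ q := by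
  have hcycle := hcyc (p ++ revChain x₀ q) (suChain_append hp (hpq ▸ suChain_revChain hq))
    (by rw [chainEnd_append, hpq, chainEnd_revChain])
  rw [chainWeight_append, chainWeight_append, hpq, chainWeight_revChain hHAs hHAu hq,
    chainWeight_revChain hHBs hHBu hq] at hcycle
  set WA := chainWeight HAs HAu x₀
  set WB := chainWeight HBs HBu x₀
  calc WA p * C₀ * (WB p)⁻¹ = WA q * ((WA q)⁻¹ * WA p) * C₀ * (WB p)⁻¹ := by group
    _ = WA q * C₀ * (WB q)⁻¹ := by rw [hcycle]; group

lemma chainConj_append_mapChain (hHAs : IsStableHolonomy f A HAs)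
    (hHAu : IsUnstableHolonomy f A HAu) (hHBs : IsStableHolonomy f B HBs)
    (hHBu : IsUnstableHolonomy f B HBu) {Q p : List (Bool × M)} (hQend : chainEnd x₀ Q = f x₀)
    (hii : A x₀ = chainConj HAs HAu HBs HBu C₀ x₀ Q * B x₀ * C₀⁻¹) (hp : suChain f x₀ p) :
    chainConj HAs HAu HBs HBu C₀ x₀ (Q ++ mapChain f p) =
      A (chainEnd x₀ p) * chainConj HAs HAu HBs HBu C₀ x₀ p * (B (chainEnd x₀ p))⁻¹ := by
  have hQ : chainConj HAs HAu HBs HBu C₀ x₀ Q = A x₀ * C₀ * (B x₀)⁻¹ := by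
    rw [hii]; group
  rw [chainConj_append, hQend, chainWeight_mapChain hHAs hHAu hp,
    chainWeight_mapChain hHBs hHBu hp, hQ, chainConj]
  group

lemma exists_eq_chainConj (hHAs : IsStableHolonomy f A HAs)
    (hHAu : IsUnstableHolonomy f A HAu) (hHBs : IsStableHolonomy f B HBs)
    (hHBu : IsUnstableHolonomy f B HBu)
    (hacc : ∀ x y : M, ∃ p : List (Bool × M), suChain f x p ∧ chainEnd x p = y)
    (hcyc : ∀ p : List (Bool × M), suChain f x₀ p → chainEnd x₀ p = x₀ →
      chainWeight HAs HAu x₀ p = C₀ * chainWeight HBs HBu x₀ p * C₀⁻¹) :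
    ∃ C : M → (V →L[ℝ] V)ˣ, ∀ p : List (Bool × M), suChain f x₀ p →
      C (chainEnd x₀ p) = chainConj HAs HAu HBs HBu C₀ x₀ p := by
  choose path hpath hend using hacc x₀
  exact ⟨fun x => chainConj HAs HAu HBs HBu C₀ x₀ (path x), fun p hp =>
    chainConj_eq_of_chainEnd_eq hHAs hHAu hHBs hHBu hcyc (hpath _) hp (hend _)⟩

end Conjugacy

theorem stmt_11_general {V : Type*} [NormedAddCommGroup V] [NormedSpace ℝ V]
    {M : Type*} [MetricSpace M] (f : M ≃ₜ M) (A B : M → (V →L[ℝ] V)ˣ)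
    (HAs HAu HBs HBu : M → M → (V →L[ℝ] V)ˣ)
    (hHAs : IsStableHolonomy (⇑f) A HAs) (hHAu : IsUnstableHolonomy f A HAu)
    (hHBs : IsStableHolonomy (⇑f) B HBs) (hHBu : IsUnstableHolonomy f B HBu)
    (hacc : ∀ x y : M, ∃ p : List (Bool × M), suChain f x p ∧ chainEnd x p = y)
    (x₀ : M) (C₀ : (V →L[ℝ] V)ˣ)
    (hcyc : ∀ p : List (Bool × M), suChain f x₀ p → chainEnd x₀ p = x₀ →
      chainWeight HAs HAu x₀ p = C₀ * chainWeight HBs HBu x₀ p * C₀⁻¹)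
    (Q : List (Bool × M)) (hQ : suChain f x₀ Q) (hQend : chainEnd x₀ Q = f x₀)
    (hii : A x₀ =
      (chainWeight HAs HAu x₀ Q * C₀ * (chainWeight HBs HBu x₀ Q)⁻¹) * B x₀ * C₀⁻¹) :
    ∃ C : M → (V →L[ℝ] V)ˣ, C x₀ = C₀ ∧
      (∀ x : M, A x = C (f x) * B x * (C x)⁻¹) ∧
      (∀ x y : M, y ∈ stableSet (⇑f) x → HAs x y = C y * HBs x y * (C x)⁻¹) ∧
      (∀ x y : M, y ∈ unstableSet f x → HAu x y = C y * HBu x y * (C x)⁻¹) := by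
  obtain ⟨C, hC⟩ := exists_eq_chainConj hHAs hHAu hHBs hHBu hacc hcyc
  have hstep : ∀ b x y, suStep f b x y →
      C y = stepWeight HAs HAu b x y * C x * (stepWeight HBs HBu b x y)⁻¹ := by
    intro b x y h
    obtain ⟨p, hp, rfl⟩ := hacc x₀ x
    have hy := hC (p ++ [(b, y)]) (suChain_append hp ⟨h, trivial⟩)
    rwa [chainEnd_append, chainConj_append_singleton, ← hC p hp] at hy
  refine ⟨C, (hC [] trivial).trans (chainConj_nil x₀), fun x => ?_, fun x y hy => ?_,
    fun x y hy => ?_⟩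
  · obtain ⟨p, hp, rfl⟩ := hacc x₀ x
    have hfx := hC (Q ++ mapChain f p) (suChain_append hQ (hQend ▸ suChain_mapChain hp))
    rw [chainEnd_append, hQend, chainEnd_mapChain,
      chainConj_append_mapChain hHAs hHAu hHBs hHBu hQend hii hp, ← hC p hp] at hfx
    rw [hfx]
    group
  · rw [hstep true x y hy, stepWeight_true, stepWeight_true]
    group
  · rw [hstep false x y hy, stepWeight_false, stepWeight_false]
    group

/-- Theorem 4.8: if (i) the `su`-cycle weights at `x₀` of `H^A` and `H^B` are
conjugate by `C₀`, and (ii) `A(x₀) = C_{fx₀} ∘ B(x₀) ∘ C₀⁻¹` where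
`C_{fx₀} = H^{A,Q}_{x₀,fx₀} ∘ C₀ ∘ (H^{B,Q}_{x₀,fx₀})⁻¹` for some `su`-path `Q` from
`x₀` to `fx₀`, then there is a conjugacy `C` between `A` and `B` with `C(x₀) = C₀`
that intertwines `H^A` and `H^B`. -/
theorem stmt_11 {V : Type*} [NormedAddCommGroup V] [NormedSpace ℝ V] [CompleteSpace V]
    {M : Type*} [MetricSpace M] (f : M ≃ₜ M) (A B : M → (V →L[ℝ] V)ˣ)
    (HAs HAu HBs HBu : M → M → (V →L[ℝ] V)ˣ)
    (hHAs : IsStableHolonomy (⇑f) A HAs) (hHAu : IsUnstableHolonomy f A HAu)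
    (hHBs : IsStableHolonomy (⇑f) B HBs) (hHBu : IsUnstableHolonomy f B HBu)
    (hacc : ∀ x y : M, ∃ p : List (Bool × M), suChain f x p ∧ chainEnd x p = y)
    (x₀ : M) (C₀ : (V →L[ℝ] V)ˣ)
    (hcyc : ∀ p : List (Bool × M), suChain f x₀ p → chainEnd x₀ p = x₀ →
      chainWeight HAs HAu x₀ p = C₀ * chainWeight HBs HBu x₀ p * C₀⁻¹)
    (Q : List (Bool × M)) (hQ : suChain f x₀ Q) (hQend : chainEnd x₀ Q = f x₀)
    (hii : A x₀ =
      (chainWeight HAs HAu x₀ Q * C₀ * (chainWeight HBs HBu x₀ Q)⁻¹) * B x₀ * C₀⁻¹) :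
    ∃ C : M → (V →L[ℝ] V)ˣ, C x₀ = C₀ ∧
      (∀ x : M, A x = C (f x) * B x * (C x)⁻¹) ∧
      (∀ x y : M, y ∈ stableSet (⇑f) x → HAs x y = C y * HBs x y * (C x)⁻¹) ∧
      (∀ x y : M, y ∈ unstableSet f x → HAu x y = C y * HBu x y * (C x)⁻¹) :=
  stmt_11_general f A B HAs HAu HBs HBu hHAs hHAu hHBs hHBu hacc x₀ C₀ hcyc Q hQ hQend hii
end
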